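/- Let β be unimodular, λ ∈ 𝔻\{0}, and J_{β,λ} the conjugation J_{β,λ}f(z) = β·κ(z)·conj(f(conj φ(z))) with κ(z) = √(1−|λ|²)/(1−z conj λ), φ(z) = (conj λ/λ)(λ−z)/(1−z conj λ). For holomorphic ψ₀, ψ₁ on 𝔻, the formal identity J_{β,λ} E(ψ₀,ψ₁) J_{β,λ} = E(ψ₀^⊙, ψ₁^⊙) holds, where ψ₀^⊙(z) = conj(ψ₀(conj φ(z))) + λ(1 − z·conj λ)·conj(ψ₁(conj φ(z)))/(1 − |λ|²) and ψ₁^⊙(z) = −λ(1 − z·conj λ)²·conj(ψ₁(conj φ(z)))/(conj(λ)(1 − |λ|²)). -/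

import Mathlib

open Complex ComplexConjugate Metric Filter

noncomputable section

/-- The Hardy space `H²`, modeled as the space of square-summable Taylor coefficient
sequences, i.e. `ℓ²(ℕ, ℂ)`, with inner product `⟨f,g⟩ = Σₙ aₙ conj(bₙ)`. -/
abbrev H2 := lp (fun _ : ℕ => ℂ) 2

/-- The holomorphic function on the unit disk associated to an element of `H²`. -/
def H2.toFun (f : H2) (z : ℂ) : ℂ := ∑' n, f n * z ^ n

/-- The open unit disk. -/
def 𝔻 : Set ℂ := Metric.ball (0 : ℂ) 1

/-- The weight `κ(z) = √(1−|λ|²)/(1−z·conj λ)`. -/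
def kappa (l : ℂ) (z : ℂ) : ℂ := (Real.sqrt (1 - ‖l‖ ^ 2) : ℂ) / (1 - z * conj l)

/-- The disk automorphism `φ(z) = (conj λ/λ)·(λ−z)/(1−z·conj λ)`. -/
def phi (l : ℂ) (z : ℂ) : ℂ := (conj l / l) * ((l - z) / (1 - z * conj l))

/-- `J_{β,λ}` acting formally on functions. -/
def Jfun (beta l : ℂ) (G : ℂ → ℂ) : ℂ → ℂ := fun z => beta * kappa l z * conj (G (conj (phi l z)))

/-! Write `w = conj (φ z)`. Since `1 − φ(z)·λ = (1 − |λ|²)/(1 − z·conj λ)`, the antiholomorphic map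
`z ↦ conj (φ z)` is an involution, so `(J F)(w) = β κ(w) conj (F z)`; and since `conj ∘ F ∘ conj`
is holomorphic, the chain rule gives `(J F)'(w) = β (κ'(w) conj (F z) + κ(w) conj (F' z) φ'(w))`.
Applying `J` once more, `β conj β = 1` and the three identities for `κ(z) conj κ(w)`,
`κ(z) conj κ'(w)` and `conj φ'(w)` turn the result into `E(ψ₀^⊙, ψ₁^⊙) F` at `z`. -/

section

variable {l z : ℂ}

lemma one_sub_mul_conj_ne_zero (hl : ‖l‖ < 1) (hz : ‖z‖ < 1) : 1 - z * conj l ≠ 0 := by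
  intro h
  have h1 : ‖z * conj l‖ < 1 := by
    rw [norm_mul, RCLike.norm_conj]
    nlinarith [norm_nonneg z, norm_nonneg l]
  rw [← sub_eq_zero.mp h, norm_one] at h1
  exact lt_irrefl 1 h1

lemma one_sub_norm_sq_ne_zero (hl : ‖l‖ ≠ 1) : 1 - (‖l‖ : ℂ) ^ 2 ≠ 0 := by
  norm_cast
  exact sub_ne_zero.mpr fun h => hl (by nlinarith [norm_nonneg l])

lemma one_sub_phi_mul (hl0 : l ≠ 0) (hz : 1 - z * conj l ≠ 0) :
    1 - phi l z * l = (1 - (‖l‖ : ℂ) ^ 2) / (1 - z * conj l) := by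
  have hz' : 1 - conj l * z ≠ 0 := by rwa [mul_comm]
  rw [phi, ← mul_conj']
  field_simp
  ring

lemma conj_sub_phi (hl0 : l ≠ 0) (hz : 1 - z * conj l ≠ 0) :
    conj l - phi l z = conj l * z * (1 - (‖l‖ : ℂ) ^ 2) / (l * (1 - z * conj l)) := by
  have hz' : 1 - conj l * z ≠ 0 := by rwa [mul_comm]
  rw [phi, ← mul_conj']
  field_simp
  ring

lemma one_sub_conj_phi_mul_ne_zero (hl0 : l ≠ 0) (hl : ‖l‖ ≠ 1) (hz : 1 - z * conj l ≠ 0) :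
    1 - conj (phi l z) * conj l ≠ 0 := by
  rw [← map_mul, ← map_one (starRingEnd ℂ), ← map_sub, one_sub_phi_mul hl0 hz, map_ne_zero]
  exact div_ne_zero (one_sub_norm_sq_ne_zero hl) hz

lemma ofReal_sqrt_one_sub_norm_sq_sq (hl : ‖l‖ < 1) :
    (Real.sqrt (1 - ‖l‖ ^ 2) : ℂ) ^ 2 = 1 - (‖l‖ : ℂ) ^ 2 := by
  rw [← ofReal_pow, Real.sq_sqrt (by nlinarith [norm_nonneg l])]
  push_cast
  ring

lemma hasDerivAt_kappa (hz : 1 - z * conj l ≠ 0) :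
    HasDerivAt (kappa l) ((Real.sqrt (1 - ‖l‖ ^ 2) : ℂ) * conj l / (1 - z * conj l) ^ 2) z := by
  have hden : HasDerivAt (fun u : ℂ => 1 - u * conj l) (-conj l) z := by
    simpa using ((hasDerivAt_id z).mul_const (conj l)).const_sub 1
  exact ((hasDerivAt_const z _).div hden hz).congr_deriv (by ring)

lemma hasDerivAt_phi (hl0 : l ≠ 0) (hz : 1 - z * conj l ≠ 0) :
    HasDerivAt (phi l) (-(conj l * (1 - (‖l‖ : ℂ) ^ 2)) / (l * (1 - z * conj l) ^ 2)) z := by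
  have hnum : HasDerivAt (fun u : ℂ => l - u) (-1) z := by
    simpa using (hasDerivAt_id z).const_sub l
  have hden : HasDerivAt (fun u : ℂ => 1 - u * conj l) (-conj l) z := by
    simpa using ((hasDerivAt_id z).mul_const (conj l)).const_sub 1
  refine ((hnum.div hden hz).const_mul (conj l / l)).congr_deriv ?_
  rw [← mul_conj']
  field_simp
  ring

lemma kappa_mul_conj_kappa_conj_phi (hl0 : l ≠ 0) (hl : ‖l‖ < 1) (hz : 1 - z * conj l ≠ 0) :
    kappa l z * conj (kappa l (conj (phi l z))) = 1 := by
  have hl1 := one_sub_norm_sq_ne_zero hl.ne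
  simp only [kappa, map_div₀, map_sub, map_one, map_mul, conj_ofReal, conj_conj,
    one_sub_phi_mul hl0 hz]
  field_simp
  exact ofReal_sqrt_one_sub_norm_sq_sq hl

lemma kappa_mul_conj_deriv_kappa_conj_phi (hl0 : l ≠ 0) (hl : ‖l‖ < 1)
    (hz : 1 - z * conj l ≠ 0) :
    kappa l z * conj (deriv (kappa l) (conj (phi l z))) =
      l * (1 - z * conj l) / (1 - (‖l‖ : ℂ) ^ 2) := by
  have hl1 := one_sub_norm_sq_ne_zero hl.ne
  rw [(hasDerivAt_kappa (one_sub_conj_phi_mul_ne_zero hl0 hl.ne hz)).deriv, kappa]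
  simp only [map_div₀, map_sub, map_one, map_mul, map_pow, conj_ofReal, conj_conj,
    one_sub_phi_mul hl0 hz]
  field_simp
  rw [ofReal_sqrt_one_sub_norm_sq_sq hl]

lemma conj_deriv_phi_conj_phi (hl0 : l ≠ 0) (hl : ‖l‖ ≠ 1) (hz : 1 - z * conj l ≠ 0) :
    conj (deriv (phi l) (conj (phi l z))) =
      -(l * (1 - z * conj l) ^ 2) / (conj l * (1 - (‖l‖ : ℂ) ^ 2)) := by
  have hl1 := one_sub_norm_sq_ne_zero hl
  rw [(hasDerivAt_phi hl0 (one_sub_conj_phi_mul_ne_zero hl0 hl hz)).deriv]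
  simp only [map_div₀, map_mul, map_pow, map_neg, map_sub, map_one, conj_ofReal, conj_conj,
    one_sub_phi_mul hl0 hz]
  field_simp

lemma conj_phi_conj_phi (hl0 : l ≠ 0) (hl : ‖l‖ ≠ 1) (hz : 1 - z * conj l ≠ 0) :
    conj (phi l (conj (phi l z))) = z := by
  have hl1 := one_sub_norm_sq_ne_zero hl
  have hcl : conj l ≠ 0 := (map_ne_zero _).mpr hl0
  rw [phi]
  simp only [map_mul, map_div₀, map_sub, map_one, conj_conj]
  rw [one_sub_phi_mul hl0 hz, conj_sub_phi hl0 hz]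
  field_simp
  exact mul_div_cancel_right₀ z (by rwa [mul_comm])

lemma hasDerivAt_Jfun {beta F' : ℂ} {F : ℂ → ℂ} (hl0 : l ≠ 0) (hz : 1 - z * conj l ≠ 0)
    (hF : HasDerivAt F F' (conj (phi l z))) :
    HasDerivAt (Jfun beta l F)
      (beta * (deriv (kappa l) z * conj (F (conj (phi l z))) +
        kappa l z * (conj F' * deriv (phi l) z))) z := by
  have hG : HasDerivAt (fun v => conj (F (conj (phi l v)))) (conj F' * deriv (phi l) z) z := by
    have h := hF.conj_conj
    rw [conj_conj] at h
    exact h.comp z (hasDerivAt_phi hl0 hz).differentiableAt.hasDerivAt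
  rw [show Jfun beta l F = fun v => beta * (kappa l v * conj (F (conj (phi l v)))) from
    funext fun _ => mul_assoc _ _ _]
  exact ((hasDerivAt_kappa hz).differentiableAt.hasDerivAt.mul hG).const_mul beta

end

theorem stmt14_general (beta l : ℂ) (hβ : ‖beta‖ = 1) (hl : l ∈ 𝔻) (hl0 : l ≠ 0)
    (ψ₀ ψ₁ F : ℂ → ℂ)
    (hF : DifferentiableOn ℂ F 𝔻) :
    ∀ z ∈ 𝔻,
      Jfun beta l (fun w => ψ₀ w * Jfun beta l F w + ψ₁ w * deriv (Jfun beta l F) w) z =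
        (conj (ψ₀ (conj (phi l z))) +
            l * (1 - z * conj l) * conj (ψ₁ (conj (phi l z))) / (1 - (‖l‖ : ℂ) ^ 2)) * F z +
          (-(l * (1 - z * conj l) ^ 2 * conj (ψ₁ (conj (phi l z)))) /
              (conj l * (1 - (‖l‖ : ℂ) ^ 2))) * deriv F z := by
  intro z hz
  have hl1 : ‖l‖ < 1 := mem_ball_zero_iff.mp hl
  have hz1 : 1 - z * conj l ≠ 0 := one_sub_mul_conj_ne_zero hl1 (mem_ball_zero_iff.mp hz)
  have hwz : conj (phi l (conj (phi l z))) = z := conj_phi_conj_phi hl0 hl1.ne hz1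
  have hFz : HasDerivAt F (deriv F z) (conj (phi l (conj (phi l z)))) := by
    rw [hwz]
    exact (hF.differentiableAt (isOpen_ball.mem_nhds hz)).hasDerivAt
  have hJderiv := (hasDerivAt_Jfun (beta := beta) hl0 (one_sub_conj_phi_mul_ne_zero hl0 hl1.ne hz1)
    hFz).deriv
  have hbeta : beta * conj beta = 1 := by rw [mul_conj', hβ]; norm_num
  have hA := kappa_mul_conj_kappa_conj_phi hl0 hl1 hz1
  have hK := kappa_mul_conj_deriv_kappa_conj_phi hl0 hl1 hz1
  have hC := conj_deriv_phi_conj_phi hl0 hl1.ne hz1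
  simp only [Jfun, hJderiv, hwz, map_add, map_mul, conj_conj]
  generalize conj (phi l z) = w at hA hK hC ⊢
  linear_combination
    (kappa l z * conj (kappa l w) * conj (ψ₀ w) * F z
      + conj (ψ₁ w) * kappa l z * conj (deriv (kappa l) w) * F z
      + conj (ψ₁ w) * kappa l z * conj (kappa l w) * deriv F z * conj (deriv (phi l) w)) * hbeta
    + (conj (ψ₀ w) * F z + conj (ψ₁ w) * deriv F z * conj (deriv (phi l) w)) * hA
    + conj (ψ₁ w) * F z * hK + conj (ψ₁ w) * deriv F z * hC

/-- the formal identity `J_{β,λ} E(ψ₀,ψ₁) J_{β,λ} = E(ψ₀^⊙, ψ₁^⊙)` with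
`ψ₀^⊙(z) = conj(ψ₀(conj φ(z))) + λ(1 − z·conj λ)·conj(ψ₁(conj φ(z)))/(1 − |λ|²)` and
`ψ₁^⊙(z) = −λ(1 − z·conj λ)²·conj(ψ₁(conj φ(z)))/(conj λ·(1 − |λ|²))`. -/
theorem stmt14 (beta l : ℂ) (hβ : ‖beta‖ = 1) (hl : l ∈ 𝔻) (hl0 : l ≠ 0)
    (ψ₀ ψ₁ F : ℂ → ℂ)
    (hψ₀ : DifferentiableOn ℂ ψ₀ 𝔻) (hψ₁ : DifferentiableOn ℂ ψ₁ 𝔻)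
    (hF : DifferentiableOn ℂ F 𝔻) :
    ∀ z ∈ 𝔻,
      Jfun beta l (fun w => ψ₀ w * Jfun beta l F w + ψ₁ w * deriv (Jfun beta l F) w) z =
        (conj (ψ₀ (conj (phi l z))) +
            l * (1 - z * conj l) * conj (ψ₁ (conj (phi l z))) / (1 - (‖l‖ : ℂ) ^ 2)) * F z +
          (-(l * (1 - z * conj l) ^ 2 * conj (ψ₁ (conj (phi l z)))) /
              (conj l * (1 - (‖l‖ : ℂ) ^ 2))) * deriv F z :=
  stmt14_general beta l hβ hl hl0 ψ₀ ψ₁ F hF
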